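/- For every integer m ≥ 1, W̃_{2m+4}(p) − W̃_{2m+3}(p) = p^m q^m [ d_{m,0} p^4 − d_{m,1} p^3 q + (d_{m,0} + 3 d_{m,1} + d_{m,2}) p^2 q^2 − (2 d_{m,0} + 2 d_{m,1} + d_{m,2}) p q^3 − (d_{m,0} + d_{m,1}) q^4 ], where d_{m,j} := C(2m, m+j) − C(2m, m+j+1). -/

import Mathlib

open Finset

/-- Probability weight of a single path of length `N`. -/
noncomputable def pathProb (p : ℝ) (N : ℕ) (x : Fin N → Bool) : ℝ :=
  p ^ (Finset.univ.filter (fun i => x i = true)).card *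
    (1 - p) ^ (N - (Finset.univ.filter (fun i => x i = true)).card)

open Classical in
/-- Probability of an event `E` for the `N`-step Bernoulli walk. -/
noncomputable def walkProb (p : ℝ) (N : ℕ) (E : Set (Fin N → Bool)) : ℝ :=
  ∑ x : Fin N → Bool, if x ∈ E then pathProb p N x else 0

/-- Partial sum `S_j` of the walk given by the path `x`. -/
def walkS (N : ℕ) (x : Fin N → Bool) (j : ℕ) : ℤ :=
  ∑ i ∈ Finset.univ.filter (fun i : Fin N => (i : ℕ) < j), (if x i then (1 : ℤ) else -1)

/-- Running maximum `M_N = max_{0 ≤ j ≤ N} S_j`. -/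
def walkM (N : ℕ) (x : Fin N → Bool) : ℤ :=
  (Finset.range (N + 1)).sup' Finset.nonempty_range_add_one (fun j => walkS N x j)

/-- `U_n(p) = P(M_n ≤ 1)`. -/
noncomputable def U (n : ℕ) (p : ℝ) : ℝ :=
  walkProb p n {x | walkM n x ≤ 1}

/-- The polynomials `Δπ_{3,k}` for `k = 0,…,4` (and `0` for `k ≥ 5`). -/
noncomputable def deltaPi3 (p : ℝ) : ℕ → ℝ
  | 0 => p ^ 3
  | 1 => -(p ^ 2 * (1 - p)) + 2 * p * (1 - p) ^ 2 + (1 - p) ^ 3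
  | 2 => -(p ^ 3) + 2 * p ^ 2 * (1 - p) + p * (1 - p) ^ 2
  | 3 => p ^ 2 * (1 - p)
  | 4 => p ^ 3
  | _ => 0

/-- `W̃_n(p) = Σ_{k=0}^{4} P(max(1, M_{n−3}) − S_{n−3} ≤ k) · Δπ_{3,k}`. -/
noncomputable def Wt (n : ℕ) (p : ℝ) : ℝ :=
  ∑ k ∈ Finset.range 5,
    walkProb p (n - 3) {x | max 1 (walkM (n - 3) x) - walkS (n - 3) x (n - 3) ≤ (k : ℤ)} *
      deltaPi3 p k

/-- `d_{m,j} = C(2m, m+j) − C(2m, m+j+1)`, as a real number. -/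
noncomputable def dCoef (m j : ℕ) : ℝ :=
  ((2 * m).choose (m + j) : ℝ) - ((2 * m).choose (m + j + 1) : ℝ)

/-!
Put `T_n = max(1, M_n) - S_n`, so that `W̃_n = ∑_k P(T_{n-3} ≤ k) Δπ_{3,k}`. Appending an up-step
turns `T` into `max(T - 1, 0)` and a down-step into `T + 1`, so `F_n(k) = P(T_n ≤ k)` satisfies
`F_{n+1}(k) = p F_n(k+1) + q F_n(k-1)`; by induction (the reflection principle)
`F_n(k) = ∑_u [2u + k ≥ n + 1] (C(n,u) - C(n,u+k+1)) p^u q^(n-u)`.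
Writing `F_n(k) = (p + q) F_n(k)`, Pascal's rule cancels every coefficient of
`F_{n+1}(k) - F_n(k)` except the one at the boundary `2u + k ∈ {n+1, n+2}`, so each increment is a
single monomial. For `n = 2m` and `k = 0, …, 4` these monomials are `d_{m,0} p^(m+1) q^m`,
`-(d_{m,0} + d_{m,1}) p^m q^(m+1)`, `d_{m,1} p^m q^(m+1)`,
`-(d_{m,1} + d_{m,2}) p^(m-1) q^(m+2)` and `d_{m,2} p^(m-1) q^(m+2)`; weighting them by `Δπ_{3,k}`
gives the formula.
-/

section Walk

variable {n : ℕ}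

theorem walkS_snoc (y : Fin n → Bool) (b : Bool) (j : ℕ) :
    walkS (n + 1) (Fin.snoc y b) j =
      walkS n y j + if n < j then (if b then 1 else -1) else 0 := by
  simp only [walkS, Finset.sum_filter, Fin.sum_univ_castSucc, Fin.snoc_castSucc, Fin.snoc_last,
    Fin.val_castSucc, Fin.val_last]

theorem walkS_of_le (y : Fin n → Bool) {j : ℕ} (h : n ≤ j) : walkS n y j = walkS n y n := by
  simp only [walkS, Finset.sum_filter]
  exact Finset.sum_congr rfl fun i _ => by simp [i.isLt, i.isLt.trans_le h]

theorem walkS_le_walkM (y : Fin n → Bool) : walkS n y n ≤ walkM n y :=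
  Finset.le_sup' _ (Finset.self_mem_range_succ n)

theorem walkM_snoc (y : Fin n → Bool) (b : Bool) :
    walkM (n + 1) (Fin.snoc y b) = max (walkS n y n + if b then 1 else -1) (walkM n y) := by
  rw [walkM, Finset.sup'_congr _ Finset.range_add_one fun _ _ => rfl,
    Finset.sup'_insert (H := Finset.nonempty_range_add_one)]
  congr 1
  · rw [walkS_snoc, if_pos n.lt_succ_self, walkS_of_le y n.le_succ]
  · exact Finset.sup'_congr _ rfl fun j hj => by
      rw [walkS_snoc, if_neg (by simpa [Finset.mem_range] using hj), add_zero]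

end Walk

def drawdown (n : ℕ) (x : Fin n → Bool) : ℤ := max 1 (walkM n x) - walkS n x n

section Drawdown

variable {n : ℕ}

theorem drawdown_nonneg (x : Fin n → Bool) : 0 ≤ drawdown n x := by
  have := walkS_le_walkM x
  simp only [drawdown]
  omega

theorem drawdown_snoc (y : Fin n → Bool) (b : Bool) :
    drawdown (n + 1) (Fin.snoc y b) =
      if b then max (drawdown n y - 1) 0 else drawdown n y + 1 := by
  have := walkS_le_walkM y
  simp only [drawdown, walkM_snoc, walkS_snoc, if_pos n.lt_succ_self, walkS_of_le y n.le_succ]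
  cases b <;> simp <;> omega

theorem pathProb_snoc (p : ℝ) (y : Fin n → Bool) (b : Bool) :
    pathProb p (n + 1) (Fin.snoc y b) = (if b then p else 1 - p) * pathProb p n y := by
  have hcard : (Finset.univ.filter fun i => (Fin.snoc y b : Fin (n + 1) → Bool) i = true).card =
      (Finset.univ.filter fun i => y i = true).card + if b then 1 else 0 := by
    simp only [Finset.card_filter, Fin.sum_univ_castSucc, Fin.snoc_castSucc, Fin.snoc_last]
  have hle : (Finset.univ.filter fun i => y i = true).card ≤ n :=
    (Finset.card_filter_le _ _).trans_eq (Finset.card_fin n)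
  simp only [pathProb, hcard]
  cases b
  · rw [if_neg Bool.false_ne_true, add_zero, Nat.sub_add_comm hle, pow_succ]
    simp only [Bool.false_eq_true, if_false]
    ring
  · rw [if_pos rfl, Nat.add_sub_add_right, pow_succ]
    simp only [if_true]
    ring

open Classical in
theorem walkProb_succ (p : ℝ) (E : Set (Fin (n + 1) → Bool)) :
    walkProb p (n + 1) E =
      p * walkProb p n {y | Fin.snoc y true ∈ E} +
        (1 - p) * walkProb p n {y | Fin.snoc y false ∈ E} := by
  rw [walkProb, ← (Fin.snocEquiv fun _ => Bool).sum_comp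
      fun x => if x ∈ E then pathProb p (n + 1) x else 0, Fintype.sum_prod_type_right,
    walkProb, walkProb, Finset.mul_sum, Finset.mul_sum, ← Finset.sum_add_distrib]
  refine Finset.sum_congr rfl fun y _ => ?_
  have hsnoc (b : Bool) : (Fin.snocEquiv fun _ => Bool) (b, y) = Fin.snoc y b := rfl
  simp only [Fintype.sum_bool, hsnoc, pathProb_snoc, Bool.false_eq_true, ↓reduceIte]
  split_ifs <;> simp_all

end Drawdown

noncomputable def drawdownCDF (p : ℝ) (n : ℕ) (k : ℤ) : ℝ :=
  walkProb p n {x | drawdown n x ≤ k}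

section DrawdownCDF

variable (p : ℝ)

theorem drawdownCDF_zero (k : ℤ) : drawdownCDF p 0 k = if 1 ≤ k then 1 else 0 := by
  have hdrawdown (x : Fin 0 → Bool) : drawdown 0 x = 1 := by simp [drawdown, walkM, walkS]
  simp [drawdownCDF, walkProb, pathProb, hdrawdown]

theorem drawdownCDF_of_neg (n : ℕ) {k : ℤ} (hk : k < 0) : drawdownCDF p n k = 0 := by
  refine Finset.sum_eq_zero fun x _ => if_neg ?_
  have := drawdown_nonneg x
  simp only [Set.mem_ofPred_eq, not_le]
  omega

theorem drawdownCDF_succ (n : ℕ) {k : ℤ} (hk : 0 ≤ k) :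
    drawdownCDF p (n + 1) k = p * drawdownCDF p n (k + 1) + (1 - p) * drawdownCDF p n (k - 1) := by
  rw [drawdownCDF, walkProb_succ]
  congr 3 <;> ext y <;>
    simp only [Set.mem_ofPred_eq, drawdown_snoc, ↓reduceIte, Bool.false_eq_true] <;> omega

end DrawdownCDF

noncomputable def pqSum (n : ℕ) (a : ℕ → ℤ) (p : ℝ) : ℝ :=
  ∑ u ∈ Finset.range (n + 1), (a u : ℝ) * p ^ u * (1 - p) ^ (n - u)

def stepCoeff (a b : ℕ → ℤ) : ℕ → ℤ
  | 0 => b 0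
  | u + 1 => a u + b (u + 1)

section PqSum

variable {n : ℕ} (p : ℝ)

theorem mul_pqSum_add_mul_pqSum (a b : ℕ → ℤ) (hb : b (n + 1) = 0) :
    p * pqSum n a p + (1 - p) * pqSum n b p = pqSum (n + 1) (stepCoeff a b) p := by
  have hq : (1 - p) * pqSum n b p = pqSum (n + 1) b p := by
    rw [pqSum, pqSum, Finset.sum_range_succ _ (n + 1), hb, Finset.mul_sum]
    simp only [Int.cast_zero, zero_mul, add_zero]
    refine Finset.sum_congr rfl fun u hu => ?_
    rw [Nat.sub_add_comm (Finset.mem_range_succ_iff.mp hu), pow_succ]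
    ring
  rw [hq, pqSum, pqSum, pqSum, Finset.mul_sum,
    Finset.sum_range_succ' fun u => (b u : ℝ) * p ^ u * (1 - p) ^ (n + 1 - u),
    Finset.sum_range_succ' fun u => (stepCoeff a b u : ℝ) * p ^ u * (1 - p) ^ (n + 1 - u),
    ← add_assoc, ← Finset.sum_add_distrib]
  simp only [stepCoeff, Int.cast_add, Nat.add_sub_add_right]
  congr 1
  exact Finset.sum_congr rfl fun u _ => by ring

theorem pqSum_sub (a b : ℕ → ℤ) : pqSum n a p - pqSum n b p = pqSum n (a - b) p := by
  simp only [pqSum, ← Finset.sum_sub_distrib, Pi.sub_apply, Int.cast_sub, sub_mul]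

theorem pqSum_eq_single (a : ℕ → ℤ) {v : ℕ} (hv : v ≤ n) (ha : ∀ u ≤ n, u ≠ v → a u = 0) :
    pqSum n a p = a v * p ^ v * (1 - p) ^ (n - v) := by
  refine Finset.sum_eq_single_of_mem v (Finset.mem_range_succ_iff.mpr hv) fun u hu huv => ?_
  rw [ha u (Finset.mem_range_succ_iff.mp hu) huv, Int.cast_zero, zero_mul, zero_mul]

end PqSum

/-- Reflection principle: the number of `n`-step paths with `u` up-steps whose drawdown is
at most `k`. -/
def cdfCoeff (n k u : ℕ) : ℤ :=
  if n + 1 ≤ 2 * u + k then n.choose u - n.choose (u + k + 1) else 0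

section CdfCoeff

variable {n : ℕ}

theorem cdfCoeff_of_lt (k : ℕ) {u : ℕ} (h : n < u) : cdfCoeff n k u = 0 := by
  simp [cdfCoeff, Nat.choose_eq_zero_of_lt h, Nat.choose_eq_zero_of_lt (by omega : n < u + k + 1)]

theorem cdfCoeff_succ_zero : cdfCoeff (n + 1) 0 = stepCoeff (cdfCoeff n 1) 0 := by
  ext (_ | u) <;> simp only [cdfCoeff, stepCoeff, Pi.zero_apply] <;> split_ifs <;> try omega
  simp only [add_zero, Nat.choose_succ_succ', Nat.cast_add]
  ring

theorem cdfCoeff_succ_succ (k : ℕ) :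
    cdfCoeff (n + 1) (k + 1) = stepCoeff (cdfCoeff n (k + 2)) (cdfCoeff n k) := by
  ext (_ | u) <;> simp only [cdfCoeff, stepCoeff] <;> split_ifs <;> try omega
  · rw [Nat.choose_eq_zero_of_lt (by omega : n + 1 < 0 + (k + 1) + 1),
      Nat.choose_eq_zero_of_lt (by omega : n < 0 + k + 1), Nat.choose_zero_right,
      Nat.choose_zero_right]
  · rw [show u + 1 + (k + 1) + 1 = u + k + 2 + 1 by omega,
      show u + (k + 2) + 1 = u + k + 2 + 1 by omega, show u + 1 + k + 1 = u + k + 2 by omega]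
    simp only [Nat.choose_succ_succ', Nat.cast_add]
    ring

end CdfCoeff

theorem drawdownCDF_eq_pqSum (p : ℝ) (n k : ℕ) :
    drawdownCDF p n k = pqSum n (cdfCoeff n k) p := by
  induction n generalizing k with
  | zero => cases k <;> simp [drawdownCDF_zero, pqSum, cdfCoeff]
  | succ n ih =>
    cases k with
    | zero =>
      have hpqSum_zero : pqSum n 0 p = 0 := by simp [pqSum]
      rw [cdfCoeff_succ_zero, ← mul_pqSum_add_mul_pqSum p _ _ rfl, ← ih 1, hpqSum_zero,
        Nat.cast_zero, drawdownCDF_succ p n le_rfl,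
        drawdownCDF_of_neg p n (k := 0 - 1) (by norm_num)]
      norm_num
    | succ k =>
      rw [drawdownCDF_succ p n (by positivity), cdfCoeff_succ_succ,
        ← mul_pqSum_add_mul_pqSum p _ _ (cdfCoeff_of_lt k n.lt_succ_self), ← ih, ← ih]
      push_cast
      ring_nf

def cdfIncrCoeff (n k : ℕ) : ℕ → ℤ :=
  cdfCoeff (n + 1) k - stepCoeff (cdfCoeff n k) (cdfCoeff n k)

section CdfIncrCoeff

variable {n k : ℕ}

theorem cdfIncrCoeff_eq_zero {u : ℕ} (h₁ : 2 * u + k ≠ n + 1) (h₂ : 2 * u + k ≠ n + 2) :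
    cdfIncrCoeff n k u = 0 := by
  cases u <;> simp only [cdfIncrCoeff, Pi.sub_apply, cdfCoeff, stepCoeff] <;> split_ifs <;>
    try omega
  · rw [Nat.choose_eq_zero_of_lt (by omega : n + 1 < 0 + k + 1),
      Nat.choose_eq_zero_of_lt (by omega : n < 0 + k + 1)]
    simp
  · rename_i u _ _ _
    rw [show u + 1 + k + 1 = u + k + 1 + 1 by omega]
    simp only [Nat.choose_succ_succ', Nat.cast_add]
    ring

theorem cdfIncrCoeff_of_add_eq_add_one {v j : ℕ} (hv : v + j = n + 1) (hk : v + k = j + 1) :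
    cdfIncrCoeff n k v = n.choose j - n.choose (j + 1) := by
  cases v <;> simp only [cdfIncrCoeff, Pi.sub_apply, cdfCoeff, stepCoeff] <;> split_ifs <;>
    try omega
  · obtain rfl : j = n + 1 := by omega
    obtain rfl : k = n + 2 := by omega
    simp [Nat.choose_eq_zero_of_lt]
  · rename_i v _ _ _
    rw [show v + 1 + k + 1 = v + k + 1 + 1 by omega, show j = v + k by omega]
    simp only [Nat.choose_succ_succ', Nat.cast_add]
    rw [Nat.choose_symm_of_eq_add (show n = v + (v + k) by omega)]
    ring

theorem cdfIncrCoeff_of_add_eq {v i : ℕ} (hv : v + i = n) (hk : v + k = i + 1) :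
    cdfIncrCoeff n k v = -(n.choose i - n.choose (i + 2)) := by
  cases v <;> simp only [cdfIncrCoeff, Pi.sub_apply, cdfCoeff, stepCoeff] <;> split_ifs <;>
    try omega
  · obtain rfl : k = n + 1 := by omega
    obtain rfl : i = n := by omega
    simp [Nat.choose_eq_zero_of_lt]
  · rename_i v _ _ _
    rw [show v + 1 + k + 1 = i + 2 by omega, Nat.choose_symm_of_eq_add hv.symm]
    ring

end CdfIncrCoeff

section DrawdownIncrement

variable (p : ℝ) {n k : ℕ}

theorem drawdownCDF_succ_sub :
    drawdownCDF p (n + 1) k - drawdownCDF p n k = pqSum (n + 1) (cdfIncrCoeff n k) p := by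
  rw [drawdownCDF_eq_pqSum, drawdownCDF_eq_pqSum, cdfIncrCoeff, ← pqSum_sub,
    ← mul_pqSum_add_mul_pqSum p _ _ (cdfCoeff_of_lt k n.lt_succ_self)]
  ring

theorem drawdownCDF_succ_sub_of_add_eq_add_one {v j : ℕ} (hv : v + j = n + 1)
    (hk : v + k = j + 1) :
    drawdownCDF p (n + 1) k - drawdownCDF p n k =
      (n.choose j - n.choose (j + 1) : ℝ) * p ^ v * (1 - p) ^ j := by
  rw [drawdownCDF_succ_sub, pqSum_eq_single p _ (v := v) (by omega) fun u _ hu =>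
    cdfIncrCoeff_eq_zero (by omega) (by omega), cdfIncrCoeff_of_add_eq_add_one hv hk,
    show n + 1 - v = j by omega]
  push_cast
  ring

theorem drawdownCDF_succ_sub_of_add_eq {v i : ℕ} (hv : v + i = n) (hk : v + k = i + 1) :
    drawdownCDF p (n + 1) k - drawdownCDF p n k =
      -(n.choose i - n.choose (i + 2) : ℝ) * p ^ v * (1 - p) ^ (i + 1) := by
  rw [drawdownCDF_succ_sub, pqSum_eq_single p _ (v := v) (by omega) fun u _ hu =>
    cdfIncrCoeff_eq_zero (by omega) (by omega), cdfIncrCoeff_of_add_eq hv hk,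
    show n + 1 - v = i + 1 by omega]
  push_cast
  ring

end DrawdownIncrement

theorem Wt_add_four_sub_Wt_add_three (p : ℝ) (n : ℕ) :
    Wt (n + 4) p - Wt (n + 3) p =
      ∑ k ∈ Finset.range 5, (drawdownCDF p (n + 1) k - drawdownCDF p n k) * deltaPi3 p k := by
  simp only [Wt, Nat.add_sub_cancel, ← Finset.sum_sub_distrib, sub_mul]
  rfl

theorem Wt_even_minus_odd_general (p : ℝ) (m : ℕ) (hm : 1 ≤ m) :
    Wt (2 * m + 4) p - Wt (2 * m + 3) p =
      p ^ m * (1 - p) ^ m *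
        (dCoef m 0 * p ^ 4 - dCoef m 1 * p ^ 3 * (1 - p) +
          (dCoef m 0 + 3 * dCoef m 1 + dCoef m 2) * p ^ 2 * (1 - p) ^ 2 -
          (2 * dCoef m 0 + 2 * dCoef m 1 + dCoef m 2) * p * (1 - p) ^ 3 -
          (dCoef m 0 + dCoef m 1) * (1 - p) ^ 4) := by
  obtain ⟨w, rfl⟩ : ∃ w, m = w + 1 := ⟨m - 1, by omega⟩
  rw [Wt_add_four_sub_Wt_add_three]
  simp only [Finset.sum_range_succ, Finset.sum_range_zero, zero_add]
  rw [drawdownCDF_succ_sub_of_add_eq_add_one p (v := w + 2) (j := w + 1) (by ring) (by ring),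
    drawdownCDF_succ_sub_of_add_eq p (v := w + 1) (i := w + 1) (by ring) (by ring),
    drawdownCDF_succ_sub_of_add_eq_add_one p (v := w + 1) (j := w + 2) (by ring) (by ring),
    drawdownCDF_succ_sub_of_add_eq p (v := w) (i := w + 2) (by ring) (by ring),
    drawdownCDF_succ_sub_of_add_eq_add_one p (v := w) (j := w + 3) (by ring) (by ring)]
  simp only [deltaPi3, dCoef]
  ring

/-- Formula for `W̃_{2m+4}(p) − W̃_{2m+3}(p)`. -/
theorem Wt_even_minus_odd (p : ℝ) (hp : p ∈ Set.Ioo (0 : ℝ) 1) (m : ℕ) (hm : 1 ≤ m) :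
    Wt (2 * m + 4) p - Wt (2 * m + 3) p =
      p ^ m * (1 - p) ^ m *
        (dCoef m 0 * p ^ 4 - dCoef m 1 * p ^ 3 * (1 - p) +
          (dCoef m 0 + 3 * dCoef m 1 + dCoef m 2) * p ^ 2 * (1 - p) ^ 2 -
          (2 * dCoef m 0 + 2 * dCoef m 1 + dCoef m 2) * p * (1 - p) ^ 3 -
          (dCoef m 0 + dCoef m 1) * (1 - p) ^ 4) :=
  Wt_even_minus_odd_general p m hm
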